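/- arXiv:1807.03708 — 3 statements merged into one kernel-verified Lean document; each statement's English description precedes it below -/
import Mathlib

section
/- Let M = !![2, 2; 2, 2] be the real 2×2 matrix with all entries 2, let θ ∈ ℝ², and let γ ∈ [0, 1/4). For s ∈ ℝ² define the trajectory s_0 = s and s_{t+1} = M.mulVec s_t + θ (this is the closed-loop dynamics of the transition T(s,a) = (2s₁+2s₂+a₁, 2s₁+2s₂+a₂) under the constant policy a = θ), and define V(s) = ∑_{t=0}^∞ γ^t · (−⟨s_t, θ⟩), where ⟨·,·⟩ is the Euclidean inner product. Then the series defining V converges for every s, V is differentiable on ℝ², and its gradient at every s equals −(∑_{t=0}^∞ γ^t M^t).mulVec θ, where the matrix series ∑_{t=0}^∞ γ^t M^t is summable and equals I + ∑_{k=1}^∞ γ^k 2^{2k−1} E with E the all-ones 2×2 matrix. -/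
/-!
Since `det (1 - M) = -3 ≠ 0`, the closed-loop map `s ↦ M s + θ` has a fixed point `p`, and every
trajectory satisfies `s_t - p = M ^ t (s - p)`. As `M` is symmetric,
`⟪s_t, θ⟫ = ⟪s - p, M ^ t θ⟫ + ⟪p, θ⟫`, so `V` is the affine function
`s ↦ -⟪s - p, ∑ γ ^ t M ^ t θ⟫ + const`, whose gradient is read off. The matrix series converges
because `M = 2 E` with `E * E = 2 E`, whence `M ^ (k + 1) = 2 ^ (2 k + 1) E` and the series is
geometric with ratio `4 γ < 1`.
-/

open scoped RealInnerProductSpace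

theorem affine_orbit_sub_eq_pow_smul {G V : Type*} [Monoid G] [AddGroup V]
    [DistribMulAction G V] {a : G} {b p : V} (hp : a • p + b = p) {x : ℕ → V}
    (hx : ∀ t, x (t + 1) = a • x t + b) (t : ℕ) : x t - p = a ^ t • (x 0 - p) := by
  induction t with
  | zero => simp
  | succ t ih =>
    conv_lhs => rw [hx, ← hp, add_sub_add_right_eq_sub, ← smul_sub, ih]
    rw [pow_succ', mul_smul]

theorem exists_smul_add_eq_self_of_isUnit_one_sub {R V : Type*} [Ring R] [AddCommGroup V]
    [Module R V] {a : R} (ha : IsUnit (1 - a)) (b : V) : ∃ p : V, a • p + b = p := by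
  obtain ⟨u, hu⟩ := ha
  refine ⟨(↑u⁻¹ : R) • b, ?_⟩
  have h : (1 - a) • (↑u⁻¹ : R) • b = b := by rw [← hu, smul_smul, Units.mul_inv, one_smul]
  rw [sub_smul, one_smul, sub_eq_iff_eq_add] at h
  rw [add_comm]
  exact h.symm

theorem pow_succ_eq_smul_of_mul_self_eq_smul {R A : Type*} [CommSemiring R] [Semiring A]
    [Algebra R A] {e : A} {c : R} (he : e * e = c • e) (k : ℕ) : e ^ (k + 1) = c ^ k • e := by
  induction k with
  | zero => simp
  | succ k ih => rw [pow_succ, ih, smul_mul_assoc, he, smul_smul, pow_succ]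

theorem Matrix.hasSum_toEuclideanLin_apply {ι 𝕜 n : Type*} [RCLike 𝕜] [Fintype n]
    [DecidableEq n] {f : ι → Matrix n n 𝕜} {S : Matrix n n 𝕜} (hf : HasSum f S)
    (v : EuclideanSpace 𝕜 n) : HasSum (fun i ↦ toEuclideanLin (f i) v) (toEuclideanLin S v) :=
  hf.map (LinearMap.applyₗ v ∘ₗ toEuclideanLin.toLinearMap)
    (LinearMap.continuous_of_finiteDimensional _)

section DiscountedValue

variable {H : Type*} [NormedAddCommGroup H] [InnerProductSpace ℝ H]

theorem hasSum_discounted_inner_affine_orbit {A : Module.End ℝ H} (hA : A.IsSymmetric)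
    {γ : ℝ} (hγ : |γ| < 1) {θ w b p s : H} (hw : HasSum (fun t ↦ γ ^ t • (A ^ t) θ) w)
    (hp : A p + b = p) {x : ℕ → H} (hx0 : x 0 = s) (hx : ∀ t, x (t + 1) = A (x t) + b) :
    HasSum (fun t ↦ γ ^ t * ⟪x t, θ⟫) (⟪s - p, w⟫ + (1 - γ)⁻¹ * ⟪p, θ⟫) := by
  have hsplit : ∀ t, γ ^ t * ⟪x t, θ⟫ = ⟪s - p, γ ^ t • (A ^ t) θ⟫ + γ ^ t * ⟪p, θ⟫ := by
    intro t
    have horbit : x t - p = (A ^ t) (s - p) := by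
      rw [← hx0]
      exact affine_orbit_sub_eq_pow_smul (a := A) hp hx t
    rw [← sub_add_cancel (x t) p, inner_add_left, horbit, hA.pow t, real_inner_smul_right,
      mul_add]
  simp only [hsplit]
  exact ((innerSL ℝ (s - p)).hasSum hw).add ((hasSum_geometric_of_abs_lt_one hγ).mul_right _)

theorem hasGradientAt_inner_add_const [CompleteSpace H] (w : H) (c : ℝ) (x : H) :
    HasGradientAt (fun y ↦ ⟪w, y⟫ + c) w x := by
  rw [hasGradientAt_iff_hasFDerivAt]
  exact (innerSL ℝ w).hasFDerivAt.add_const c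

end DiscountedValue

theorem two_two_matrix_eq_smul :
    (!![2, 2; 2, 2] : Matrix (Fin 2) (Fin 2) ℝ) = (2 : ℝ) • !![1, 1; 1, 1] := by
  ext i j; fin_cases i <;> fin_cases j <;> norm_num

theorem one_one_matrix_mul_self :
    (!![1, 1; 1, 1] : Matrix (Fin 2) (Fin 2) ℝ) * !![1, 1; 1, 1] = (2 : ℝ) • !![1, 1; 1, 1] := by
  ext i j; fin_cases i <;> fin_cases j <;> norm_num [Matrix.mul_apply]

theorem isSymmetric_toEuclideanLin_two_two :
    (Matrix.toEuclideanLin (!![2, 2; 2, 2] : Matrix (Fin 2) (Fin 2) ℝ)).IsSymmetric :=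
  Matrix.isSymmetric_toEuclideanLin_iff.mpr <| by ext i j; fin_cases i <;> fin_cases j <;> rfl

theorem isUnit_one_sub_toEuclideanLin_two_two :
    IsUnit (1 - Matrix.toEuclideanLin (!![2, 2; 2, 2] : Matrix (Fin 2) (Fin 2) ℝ)) := by
  have h : IsUnit (1 - !![2, 2; 2, 2] : Matrix (Fin 2) (Fin 2) ℝ) :=
    (Matrix.isUnit_iff_isUnit_det _).mpr (by norm_num [Matrix.det_fin_two])
  have h' := h.map (Matrix.toLpLinAlgEquiv 2 : Matrix (Fin 2) (Fin 2) ℝ ≃ₐ[ℝ] _)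
  rwa [map_sub, map_one] at h'

theorem discounted_two_two_matrix_pow_succ (γ : ℝ) (k : ℕ) :
    γ ^ (k + 1) • (!![2, 2; 2, 2] : Matrix (Fin 2) (Fin 2) ℝ) ^ (k + 1) =
      (γ ^ (k + 1) * 2 ^ (2 * (k + 1) - 1)) • !![1, 1; 1, 1] := by
  rw [two_two_matrix_eq_smul, smul_pow,
    pow_succ_eq_smul_of_mul_self_eq_smul one_one_matrix_mul_self, smul_smul, smul_smul,
    mul_assoc, ← pow_add, show 2 * (k + 1) - 1 = k + 1 + k by omega]

theorem summable_discounted_two_two_coeff {γ : ℝ} (hγ0 : 0 ≤ γ) (hγ : γ < 1 / 4) :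
    Summable fun k : ℕ ↦ γ ^ (k + 1) * (2 : ℝ) ^ (2 * (k + 1) - 1) := by
  have hgeom := (summable_geometric_of_lt_one (by linarith : 0 ≤ 4 * γ) (by linarith)).mul_left
    (2 * γ)
  refine hgeom.congr fun k ↦ ?_
  rw [show 2 * (k + 1) - 1 = 2 * k + 1 by omega, pow_succ, pow_succ, pow_mul, mul_pow]
  ring

theorem hasSum_discounted_two_two_matrix_pow {γ : ℝ} (hγ0 : 0 ≤ γ) (hγ : γ < 1 / 4) :
    HasSum (fun t : ℕ ↦ γ ^ t • (!![2, 2; 2, 2] : Matrix (Fin 2) (Fin 2) ℝ) ^ t)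
      (1 + ∑' k : ℕ, (γ ^ (k + 1) * 2 ^ (2 * (k + 1) - 1)) • !![1, 1; 1, 1]) := by
  have htail : HasSum
      (fun k : ℕ ↦ γ ^ (k + 1) • (!![2, 2; 2, 2] : Matrix (Fin 2) (Fin 2) ℝ) ^ (k + 1))
      (∑' k : ℕ, (γ ^ (k + 1) * 2 ^ (2 * (k + 1) - 1)) • !![1, 1; 1, 1]) :=
    funext (discounted_two_two_matrix_pow_succ γ) ▸
      ((summable_discounted_two_two_coeff hγ0 hγ).smul_const
        (!![1, 1; 1, 1] : Matrix (Fin 2) (Fin 2) ℝ)).hasSum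
  have h := (hasSum_nat_add_iff
    (f := fun t : ℕ ↦ γ ^ t • (!![2, 2; 2, 2] : Matrix (Fin 2) (Fin 2) ℝ) ^ t) 1).mp htail
  rwa [Finset.sum_range_one, pow_zero, pow_zero, one_smul, add_comm] at h

/-- Example 1 of the paper in full: for the transition `T(s,a) = (2s₁+2s₂+a₁, 2s₁+2s₂+a₂)`,
constant policy `a = θ`, reward `r(s,a) = -sᵀa` and discount `γ < 1/4`, the value function
series converges, `V` is differentiable, and
`∇V(s) = -(∑ₜ γ^t M^t) θ = -(I + ∑_{k≥1} γ^k 2^(2k-1) E) θ`. -/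
theorem stmt_10 (γ : ℝ) (hγ0 : 0 ≤ γ) (hγ : γ < 1 / 4)
    (θ : EuclideanSpace ℝ (Fin 2))
    (M E : Matrix (Fin 2) (Fin 2) ℝ)
    (hM : M = !![2, 2; 2, 2]) (hE : E = !![1, 1; 1, 1])
    (traj : EuclideanSpace ℝ (Fin 2) → ℕ → EuclideanSpace ℝ (Fin 2))
    (htraj0 : ∀ s, traj s 0 = s)
    (htraj : ∀ s t, traj s (t + 1) =
      (WithLp.equiv 2 (Fin 2 → ℝ)).symm (M.mulVec (WithLp.equiv 2 (Fin 2 → ℝ) (traj s t))) + θ)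
    (V : EuclideanSpace ℝ (Fin 2) → ℝ)
    (hV : ∀ s, V s = ∑' t : ℕ, γ ^ t * (-(inner ℝ (traj s t) θ : ℝ))) :
    (∀ s, Summable fun t : ℕ => γ ^ t * (-(inner ℝ (traj s t) θ : ℝ))) ∧
    (∀ s, DifferentiableAt ℝ V s) ∧
    Summable (fun t : ℕ => γ ^ t • M ^ t) ∧
    (∑' t : ℕ, γ ^ t • M ^ t) = 1 + ∑' k : ℕ, (γ ^ (k + 1) * 2 ^ (2 * (k + 1) - 1)) • E ∧
    (∀ s, gradient V s = -(WithLp.equiv 2 (Fin 2 → ℝ)).symm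
      ((∑' t : ℕ, γ ^ t • M ^ t).mulVec (WithLp.equiv 2 (Fin 2 → ℝ) θ))) := by
  subst hM hE
  have hMsum := hasSum_discounted_two_two_matrix_pow hγ0 hγ
  obtain ⟨p, hp⟩ :=
    exists_smul_add_eq_self_of_isUnit_one_sub isUnit_one_sub_toEuclideanLin_two_two θ
  set w := (WithLp.equiv 2 (Fin 2 → ℝ)).symm
    ((∑' t : ℕ, γ ^ t • (!![2, 2; 2, 2] : Matrix (Fin 2) (Fin 2) ℝ) ^ t).mulVec
      (WithLp.equiv 2 (Fin 2 → ℝ) θ))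
  have hw : HasSum (fun t ↦ γ ^ t •
      (Matrix.toEuclideanLin (!![2, 2; 2, 2] : Matrix (Fin 2) (Fin 2) ℝ) ^ t) θ) w := by
    have h := Matrix.hasSum_toEuclideanLin_apply hMsum.summable.hasSum θ
    simp only [map_smul, LinearMap.smul_apply, Matrix.toLpLin_pow] at h
    exact h
  have hsum s := (hasSum_discounted_inner_affine_orbit isSymmetric_toEuclideanLin_two_two
    (by rw [abs_of_nonneg hγ0]; linarith) hw hp (htraj0 s) (htraj s)).neg
  simp only [← mul_neg] at hsum
  have hVeq : V = fun s ↦ ⟪-w, s⟫ + (⟪p, w⟫ - (1 - γ)⁻¹ * ⟪p, θ⟫) := funext fun s ↦ by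
    rw [hV, (hsum s).tsum_eq, inner_sub_left, inner_neg_left, real_inner_comm w]
    ring
  have hgrad s : HasGradientAt V (-w) s := hVeq ▸ hasGradientAt_inner_add_const _ _ s
  exact ⟨fun s ↦ (hsum s).summable, fun s ↦ (hgrad s).differentiableAt, hMsum.summable,
    hMsum.tsum_eq, fun s ↦ (hgrad s).gradient⟩
end

section
/- Let S be a type, T : S → S a map, γ ∈ [0, 1) a real number, and f : S → ℝ a function that is bounded below (there exists C such that f(s) ≥ C for all s) and satisfies f(s) ≥ γ · f(T(s)) for every s ∈ S. Then f(s) ≥ 0 for every s ∈ S. -/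
open Filter Topology

theorem Function.pow_mul_iterate_le {R S : Type*} [Semiring R] [PartialOrder R] [IsOrderedRing R]
    {T : S → S} {γ : R} (hγ : 0 ≤ γ) {f : S → R} (hrec : ∀ s, γ * f (T s) ≤ f s)
    (s : S) (n : ℕ) : γ ^ n * f (T^[n] s) ≤ f s := by
  induction n with
  | zero => simp
  | succ k ih =>
    calc γ ^ (k + 1) * f (T^[k + 1] s)
        = γ ^ k * (γ * f (T (T^[k] s))) := by
          rw [Function.iterate_succ_apply', pow_succ, mul_assoc]
      _ ≤ γ ^ k * f (T^[k] s) := mul_le_mul_of_nonneg_left (hrec _) (pow_nonneg hγ k)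
      _ ≤ f s := ih

theorem nonneg_of_forall_pow_mul_le {γ C x : ℝ} (hγ0 : 0 ≤ γ) (hγ1 : γ < 1)
    (h : ∀ n : ℕ, γ ^ n * C ≤ x) : 0 ≤ x := by
  have hlim : Tendsto (fun n : ℕ => γ ^ n * C) atTop (𝓝 0) := by
    simpa using (tendsto_pow_atTop_nhds_zero_of_lt_one hγ0 hγ1).mul_const C
  exact le_of_tendsto' hlim h

/-- The key step of the proof of Theorem 3 of the paper: a bounded-below function
satisfying the discounted self-improvement inequality `f(s) ≥ γ f(T(s))` along orbits
must be nonnegative everywhere. -/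
theorem stmt_14 {S : Type*} (T : S → S) (γ : ℝ) (hγ0 : 0 ≤ γ) (hγ1 : γ < 1)
    (f : S → ℝ) (C : ℝ) (hbdd : ∀ s, C ≤ f s)
    (hrec : ∀ s, γ * f (T s) ≤ f s) :
    ∀ s, 0 ≤ f s := by
  intro s
  refine nonneg_of_forall_pow_mul_le (C := C) hγ0 hγ1 fun n => ?_
  calc γ ^ n * C ≤ γ ^ n * f (T^[n] s) := mul_le_mul_of_nonneg_left (hbdd _) (pow_nonneg hγ0 n)
    _ ≤ f s := Function.pow_mul_iterate_le hγ0 hrec s n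
end

section
/- Let n ≥ 1 and γ ∈ [0, 1). Let κ : ℝ^n → Measure(ℝ^n) assign to each state s a probability measure κ(s) on ℝ^n such that the identity map x ↦ x is Bochner integrable with respect to κ(s); define T*(s) = ∫ x dκ(s)(x) ∈ ℝ^n. Let r : ℝ^n → ℝ and let V, V* : ℝ^n → ℝ be functions such that: (i) V is convex on ℝ^n; (ii) for every s, V is integrable with respect to κ(s) and V satisfies the Bellman equation V(s) = r(s) + γ ∫ V(s') dκ(s)(s'); (iii) V* satisfies the deterministic Bellman equation V*(s) = r(s) + γ V*(T*(s)); and (iv) the function s ↦ V(s) − V*(s) is bounded below. Then V(s) ≥ V*(s) for every s ∈ ℝ^n, and consequently, for every probability measure p₀ on ℝ^n with respect to which V and V* are integrable, ∫ V dp₀ ≥ ∫ V* dp₀. -/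
open MeasureTheory

/-! Jensen's inequality for the convex `V` gives `V (T* s) ≤ ∫ V dκ(s)`, so subtracting the two
Bellman equations shows that the gap `D = V - V*` satisfies `γ D (T* s) ≤ D s`. Iterating along the
orbit of `T*` gives `γ ^ k C ≤ γ ^ k D (T*^[k] s) ≤ D s`, and letting `k → ∞` yields `0 ≤ D s`. -/

theorem ConvexOn.map_integral_id_le {E : Type*} [NormedAddCommGroup E] [NormedSpace ℝ E]
    [FiniteDimensional ℝ E] [MeasurableSpace E] {μ : Measure E} [IsProbabilityMeasure μ]
    {g : E → ℝ} (hg : ConvexOn ℝ Set.univ g) (hid : Integrable (fun x => x) μ)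
    (hgi : Integrable g μ) : g (∫ x, x ∂μ) ≤ ∫ x, g x ∂μ :=
  hg.map_integral_le (hg.continuousOn isOpen_univ) isClosed_univ
    (.of_forall fun _ => Set.mem_univ _) hid hgi

section DiscountedRecursion

variable {α : Type*} {T : α → α} {f : α → ℝ} {γ : ℝ}

theorem pow_mul_apply_iterate_le (hγ : 0 ≤ γ) (hstep : ∀ s, γ * f (T s) ≤ f s) (s : α) (k : ℕ) :
    γ ^ k * f (T^[k] s) ≤ f s := by
  induction k with
  | zero => simp
  | succ k ih =>
    calc γ ^ (k + 1) * f (T^[k + 1] s) = γ ^ k * (γ * f (T (T^[k] s))) := by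
          rw [Function.iterate_succ_apply']; ring
      _ ≤ γ ^ k * f (T^[k] s) := mul_le_mul_of_nonneg_left (hstep _) (pow_nonneg hγ k)
      _ ≤ f s := ih

theorem nonneg_of_discounted_le_of_bddBelow (hγ0 : 0 ≤ γ) (hγ1 : γ < 1)
    (hstep : ∀ s, γ * f (T s) ≤ f s) {C : ℝ} (hlb : ∀ s, C ≤ f s) (s : α) : 0 ≤ f s := by
  have hbound : ∀ k : ℕ, γ ^ k * C ≤ f s := fun k =>
    (mul_le_mul_of_nonneg_left (hlb _) (pow_nonneg hγ0 k)).trans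
      (pow_mul_apply_iterate_le hγ0 hstep s k)
  have hlim : Filter.Tendsto (fun k : ℕ => γ ^ k * C) Filter.atTop (nhds 0) := by
    simpa using (tendsto_pow_atTop_nhds_zero_of_lt_one hγ0 hγ1).mul_const C
  exact le_of_tendsto hlim (.of_forall hbound)

end DiscountedRecursion

theorem stmt_15_general (n : ℕ) (γ : ℝ) (hγ0 : 0 ≤ γ) (hγ1 : γ < 1)
    (κ : EuclideanSpace ℝ (Fin n) → Measure (EuclideanSpace ℝ (Fin n)))
    (hκ : ∀ s, IsProbabilityMeasure (κ s))
    (hκint : ∀ s, Integrable (fun x => x) (κ s))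
    (Tstar : EuclideanSpace ℝ (Fin n) → EuclideanSpace ℝ (Fin n))
    (hTstar : ∀ s, Tstar s = ∫ x, x ∂(κ s))
    (r V Vstar : EuclideanSpace ℝ (Fin n) → ℝ)
    (hVconv : ConvexOn ℝ Set.univ V)
    (hVint : ∀ s, Integrable V (κ s))
    (hBell : ∀ s, V s = r s + γ * ∫ s', V s' ∂(κ s))
    (hBellstar : ∀ s, Vstar s = r s + γ * Vstar (Tstar s))
    (C : ℝ) (hlb : ∀ s, C ≤ V s - Vstar s) :
    (∀ s, Vstar s ≤ V s) ∧
    (∀ p₀ : Measure (EuclideanSpace ℝ (Fin n)), IsProbabilityMeasure p₀ →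
      Integrable V p₀ → Integrable Vstar p₀ →
      ∫ s, Vstar s ∂p₀ ≤ ∫ s, V s ∂p₀) := by
  have hJensen (s) : V (Tstar s) ≤ ∫ s', V s' ∂(κ s) := by
    have := hκ s
    rw [hTstar s]
    exact hVconv.map_integral_id_le (hκint s) (hVint s)
  have hstep (s) : γ * (V (Tstar s) - Vstar (Tstar s)) ≤ V s - Vstar s := by
    rw [hBell s, hBellstar s]
    linarith [mul_le_mul_of_nonneg_left (hJensen s) hγ0]
  have hpt (s) : Vstar s ≤ V s :=
    sub_nonneg.mp (nonneg_of_discounted_le_of_bddBelow (f := fun s => V s - Vstar s)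
      hγ0 hγ1 hstep hlb s)
  exact ⟨hpt, fun p₀ _ hVi hVstari => integral_mono hVstari hVi hpt⟩

/-- Theorem 3 of the paper: if the value function `V` of the original MDP (with next-state
kernel `κ`) is convex, `V*` is the value function of the model-based augmented MDP whose
deterministic transition `T*(s)` is the mean of `κ(s)`, and `V - V*` is bounded below, then
`V ≥ V*` pointwise, and hence `J(μ_θ) = ∫ V dp₀ ≥ ∫ V* dp₀ = J*(μ_θ)` for every initial
distribution `p₀`. -/
theorem stmt_15 (n : ℕ) (hn : 1 ≤ n) (γ : ℝ) (hγ0 : 0 ≤ γ) (hγ1 : γ < 1)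
    (κ : EuclideanSpace ℝ (Fin n) → Measure (EuclideanSpace ℝ (Fin n)))
    (hκ : ∀ s, IsProbabilityMeasure (κ s))
    (hκint : ∀ s, Integrable (fun x => x) (κ s))
    (Tstar : EuclideanSpace ℝ (Fin n) → EuclideanSpace ℝ (Fin n))
    (hTstar : ∀ s, Tstar s = ∫ x, x ∂(κ s))
    (r V Vstar : EuclideanSpace ℝ (Fin n) → ℝ)
    (hVconv : ConvexOn ℝ Set.univ V)
    (hVint : ∀ s, Integrable V (κ s))
    (hBell : ∀ s, V s = r s + γ * ∫ s', V s' ∂(κ s))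
    (hBellstar : ∀ s, Vstar s = r s + γ * Vstar (Tstar s))
    (C : ℝ) (hlb : ∀ s, C ≤ V s - Vstar s) :
    (∀ s, Vstar s ≤ V s) ∧
    (∀ p₀ : Measure (EuclideanSpace ℝ (Fin n)), IsProbabilityMeasure p₀ →
      Integrable V p₀ → Integrable Vstar p₀ →
      ∫ s, Vstar s ∂p₀ ≤ ∫ s, V s ∂p₀) :=
  stmt_15_general n γ hγ0 hγ1 κ hκ hκint Tstar hTstar r V Vstar hVconv hVint hBell hBellstar C hlb
end
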